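/- arXiv:1406.5135 — 2 statements merged into one kernel-verified Lean document; each statement's English description precedes it below -/
import Mathlib

section
/- For k > 1, a_k = ((-1)^k / k)·∑_{j=0}^{k-2} |a_j b_{k-1-j}|, where (a_k) and (b_k) are as in the recursion a_0 = 1, a_1 = 0, a_k = (1/k)∑_{j=0}^{k-2} a_j b_{k-1-j}, and b_k = (-1)^{k+1}(1 - 2^{-k})ζ(k+1). -/
open Filter Topology Finset

/-- Riemann zeta at integer arguments: ζ(k) = ∑_{n=1}^∞ 1/n^k. -/
noncomputable def zeta (k : ℕ) : ℝ := ∑' n : ℕ, 1 / (n + 1 : ℝ) ^ k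

/-- b_k = (-1)^{k+1} (1 - 2^{-k}) ζ(k+1). -/
noncomputable def b (k : ℕ) : ℝ := (-1) ^ (k + 1) * (1 - (2 : ℝ) ^ (-(k : ℤ))) * zeta (k + 1)

/-! Since `b m` has sign `(-1)^(m+1)`, induction shows that `a j` has sign `(-1)^j`; then every
term `a j * b (k-1-j)` of the recursion for `a k` has the same sign `(-1)^k`, so the sum equals
`(-1)^k` times the sum of absolute values. -/

section Signs

variable {R : Type*} [CommRing R] [LinearOrder R] [IsStrictOrderedRing R]

lemma neg_one_pow_mul_abs_neg_one_pow_mul {y : R} (hy : 0 ≤ y) (n : ℕ) :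
    (-1) ^ n * |(-1) ^ n * y| = (-1) ^ n * y := by
  rw [abs_mul, abs_neg_one_pow, one_mul, abs_of_nonneg hy]

lemma mul_eq_neg_one_pow_add_mul_abs {x y : R} {m n : ℕ}
    (hx : x = (-1) ^ m * |x|) (hy : y = (-1) ^ n * |y|) :
    x * y = (-1) ^ (m + n) * |x * y| :=
  calc x * y = ((-1) ^ m * |x|) * ((-1) ^ n * |y|) := by rw [← hx, ← hy]
    _ = (-1) ^ (m + n) * |x * y| := by rw [pow_add, abs_mul]; ring

end Signs

lemma zeta_nonneg (k : ℕ) : 0 ≤ zeta k := tsum_nonneg fun _ => by positivity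

lemma b_eq_neg_one_pow_mul_abs (m : ℕ) : b m = (-1) ^ (m + 1) * |b m| := by
  have h2 : (2 : ℝ) ^ (-(m : ℤ)) ≤ 1 := zpow_le_one_of_nonpos₀ one_le_two (by omega)
  have hb : b m = (-1) ^ (m + 1) * ((1 - (2 : ℝ) ^ (-(m : ℤ))) * zeta (m + 1)) := by
    rw [b, mul_assoc]
  rw [hb, neg_one_pow_mul_abs_neg_one_pow_mul (mul_nonneg (by linarith) (zeta_nonneg _))]

lemma sum_mul_b_eq_neg_one_pow_mul_sum_abs (a : ℕ → ℝ) (k : ℕ)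
    (ha : ∀ j < k - 1, a j = (-1) ^ j * |a j|) :
    ∑ j ∈ range (k - 1), a j * b (k - 1 - j) =
      (-1) ^ k * ∑ j ∈ range (k - 1), |a j * b (k - 1 - j)| := by
  rw [mul_sum]
  refine sum_congr rfl fun j hj => ?_
  replace hj : j < k - 1 := mem_range.mp hj
  have hexp : j + (k - 1 - j + 1) = k := by omega
  have hterm := mul_eq_neg_one_pow_add_mul_abs (ha j hj) (b_eq_neg_one_pow_mul_abs (k - 1 - j))
  rwa [hexp] at hterm

lemma eq_neg_one_pow_mul_abs_of_recursion (a : ℕ → ℝ) (h0 : a 0 = 1) (h1 : a 1 = 0)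
    (hrec : ∀ k, 2 ≤ k →
      a k = (1 / (k : ℝ)) * ∑ j ∈ range (k - 1), a j * b (k - 1 - j)) (k : ℕ) :
    a k = (-1) ^ k * |a k| := by
  induction k using Nat.strong_induction_on with
  | _ k ih =>
    match k with
    | 0 => simp [h0]
    | 1 => simp [h1]
    | k + 2 =>
      have hsum := sum_mul_b_eq_neg_one_pow_mul_sum_abs a (k + 2) fun j hj => ih j (by omega)
      have hk : a (k + 2) = (-1) ^ (k + 2) *
          ((∑ j ∈ range (k + 2 - 1), |a j * b (k + 2 - 1 - j)|) / (k + 2 : ℕ)) := by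
        rw [hrec (k + 2) (by omega), hsum]; ring
      rw [hk, neg_one_pow_mul_abs_neg_one_pow_mul
        (div_nonneg (sum_nonneg fun _ _ => abs_nonneg _) (Nat.cast_nonneg _))]

theorem a_eq_signed_abs_sum (a : ℕ → ℝ)
    (h0 : a 0 = 1) (h1 : a 1 = 0)
    (hrec : ∀ k, 2 ≤ k →
      a k = (1 / (k : ℝ)) * ∑ j ∈ Finset.range (k - 1), a j * b (k - 1 - j)) :
    ∀ k, 1 < k →
      a k = ((-1) ^ k / (k : ℝ)) * ∑ j ∈ Finset.range (k - 1), |a j * b (k - 1 - j)| := by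
  intro k hk
  have ha j (_ : j < k - 1) := eq_neg_one_pow_mul_abs_of_recursion a h0 h1 hrec j
  rw [hrec k hk, sum_mul_b_eq_neg_one_pow_mul_sum_abs a k ha]
  ring
end

section
/- a_{k+1}/a_k → -1 as k → ∞, where (a_k) satisfies a_0 = 1, a_1 = 0, a_k = (1/k)∑_{j=0}^{k-2} a_j b_{k-1-j} for k ≥ 2 with b_k = (-1)^{k+1}(1 - 2^{-k})ζ(k+1). Equivalently, (1/(k+1))·m_{k+1}/m_k → -1 for the higher Mahler measures m_k of x - r with |r| = 1. -/
/-!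
Put `c k = (-1)^k a k` and `η m = (1 - 2^{-m}) ζ(m+1)`, so that
`(n+2) c_{n+2} = ∑_{j ≤ n} c_j η_{n+1-j}`. By the alternating series `η m = ∑ (-1)^n/(n+1)^{m+1}`
every weight lies in `[1 - 2^{-(m+1)}, 1]`. Hence `0 ≤ c ≤ 1`, and since the weights lose at most
`∑ 2^{-(m+1)} ≤ 1/2` in total, induction gives `c_{n+2} ≥ 1/6`. Writing `η = 1 - ε`, the differences
`c_{k+1} - c_k` satisfy a recurrence driven by the geometrically small `ε` alone, so they decay like
`(3/4)^k`. So `c` converges to some `A ≥ 1/6`, and `a_{k+1}/a_k = -c_{k+1}/c_k → -1`.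
-/

open Filter Topology Finset

-- The Dirichlet eta function at `m + 1`.
noncomputable def eta (m : ℕ) : ℝ := (1 - (2 : ℝ) ^ (-(m : ℤ))) * zeta (m + 1)

lemma hasSum_zeta {s : ℕ} (hs : 1 < s) : HasSum (fun n : ℕ => 1 / (n + 1 : ℝ) ^ s) (zeta s) := by
  refine Summable.hasSum ?_
  exact_mod_cast (summable_nat_add_iff 1).mpr (Real.summable_one_div_nat_pow.mpr hs)

lemma hasSum_eta {m : ℕ} (hm : 1 ≤ m) :
    HasSum (fun n : ℕ => (-1) ^ n * (1 / (n + 1 : ℝ) ^ (m + 1))) (eta m) := by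
  set g : ℕ → ℝ := fun n => 1 / (n + 1 : ℝ) ^ (m + 1)
  have hg : HasSum g (zeta (m + 1)) := hasSum_zeta (by omega)
  have hodd : HasSum (fun k => g (2 * k + 1)) ((1 / 2) ^ (m + 1) * zeta (m + 1)) := by
    have : (fun k => g (2 * k + 1)) = fun k => (1 / 2) ^ (m + 1) * g k := by
      funext k
      simp only [g]
      push_cast
      rw [show 2 * (k : ℝ) + 1 + 1 = 2 * (k + 1) by ring, mul_pow, one_div_pow, one_div_mul_one_div]
    exact this ▸ hg.mul_left _
  obtain ⟨E, heven⟩ : Summable fun k => g (2 * k) :=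
    hg.summable.comp_injective (mul_right_injective₀ two_ne_zero)
  have hE := (heven.even_add_odd hodd).unique hg
  have h2 : (2 : ℝ) ^ (-(m : ℤ)) = 2 * (1 / 2) ^ (m + 1) := by
    rw [zpow_neg, zpow_natCast, one_div, inv_pow, pow_succ]
    field_simp
  convert HasSum.even_add_odd (f := fun n => (-1) ^ n * g n)
    (by simpa [pow_mul] using heven) (by simpa [pow_succ, pow_mul] using hodd.neg) using 1
  rw [eta, h2]
  simp only [one_div, inv_pow] at hE ⊢
  linear_combination -hE

lemma eta_mem_Icc {m : ℕ} (hm : 1 ≤ m) : eta m ∈ Set.Icc (1 - (1 / 2) ^ (m + 1)) 1 := by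
  have hanti : Antitone fun n : ℕ => 1 / (n + 1 : ℝ) ^ (m + 1) := fun i j hij => by
    dsimp only
    gcongr
  have hlim := (hasSum_eta hm).tendsto_sum_nat
  constructor
  · have := hanti.alternating_series_le_tendsto hlim 1
    norm_num [sum_range_succ] at this
    rw [one_div_pow, one_div]
    linarith
  · simpa using hanti.tendsto_le_alternating_series hlim 0

lemma b_eq_neg_one_pow_mul_eta (m : ℕ) : b m = (-1) ^ (m + 1) * eta m := by
  rw [b, eta, mul_assoc]

lemma recurrence_neg_one_pow_mul (a : ℕ → ℝ)
    (hrec : ∀ k, 2 ≤ k → a k = (1 / (k : ℝ)) * ∑ j ∈ range (k - 1), a j * b (k - 1 - j))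
    (n : ℕ) :
    ((n : ℝ) + 2) * ((-1) ^ (n + 2) * a (n + 2)) =
      ∑ j ∈ range (n + 1), (-1) ^ j * a j * eta (n + 1 - j) := by
  have hterm : ∀ j ∈ range (n + 1),
      a j * b (n + 1 - j) = (-1) ^ n * ((-1) ^ j * a j * eta (n + 1 - j)) := by
    intro j hj
    have hsign : (-1 : ℝ) ^ (n + 1 - j + 1) = (-1) ^ n * (-1) ^ j := by
      rw [← pow_add, neg_one_pow_eq_pow_mod_two, neg_one_pow_eq_pow_mod_two (n := n + j)]
      congr 1
      grind
    rw [b_eq_neg_one_pow_mul_eta, hsign]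
    ring
  rw [hrec (n + 2) (by omega), show n + 2 - 1 = n + 1 by omega, sum_congr rfl hterm, ← mul_sum]
  push_cast
  field_simp
  rw [← pow_add, Even.neg_one_pow ⟨n + 1, by ring⟩, one_mul]

lemma sum_range_half_pow_le (n : ℕ) : ∑ j ∈ range (n + 1), (1 / 2 : ℝ) ^ (n + 2 - j) ≤ 1 / 2 := by
  rw [← sum_range_reflect]
  calc ∑ j ∈ range (n + 1), (1 / 2 : ℝ) ^ (n + 2 - (n + 1 - 1 - j))
      = 1 / 4 * ∑ j ∈ range (n + 1), (1 / 2 : ℝ) ^ j := by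
        rw [mul_sum]
        refine sum_congr rfl fun j hj => ?_
        rw [show n + 2 - (n + 1 - 1 - j) = j + 2 by grind, pow_add]
        ring
    _ ≤ 1 / 4 * 2 := by gcongr; exact sum_geometric_two_le _
    _ = 1 / 2 := by norm_num

lemma mul_sub_eq_of_recurrence {c ε : ℕ → ℝ}
    (hrec : ∀ n : ℕ, ((n : ℝ) + 2) * c (n + 2) = ∑ j ∈ range (n + 1), c j * (1 - ε (n + 1 - j)))
    (n : ℕ) :
    ((n : ℝ) + 3) * (c (n + 3) - c (n + 2)) = -(c (n + 2) - c (n + 1)) - c 0 * ε (n + 2)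
      - ∑ i ∈ range (n + 1), (c (i + 1) - c i) * ε (n + 1 - i) := by
  have hnext := hrec (n + 1)
  rw [sum_range_succ'] at hnext
  simp only [Nat.add_sub_add_right] at hnext
  have htel := sum_range_sub c (n + 1)
  have hsplit : ∑ i ∈ range (n + 1), (c (i + 1) - c i) * (1 - ε (n + 1 - i)) =
      ∑ i ∈ range (n + 1), c (i + 1) * (1 - ε (n + 1 - i)) -
        ∑ i ∈ range (n + 1), c i * (1 - ε (n + 1 - i)) := by
    rw [← sum_sub_distrib]; simp only [sub_mul]
  have hdist : ∑ i ∈ range (n + 1), (c (i + 1) - c i) * (1 - ε (n + 1 - i)) =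
      ∑ i ∈ range (n + 1), (c (i + 1) - c i) -
        ∑ i ∈ range (n + 1), (c (i + 1) - c i) * ε (n + 1 - i) := by
    rw [← sum_sub_distrib]; simp only [mul_sub, mul_one]
  push_cast at hnext
  linear_combination hnext - hrec n - hsplit + hdist + htel

structure NearOneRecurrence (c w : ℕ → ℝ) : Prop where
  zero : c 0 = 1
  one : c 1 = 0
  weight_mem : ∀ m, 1 ≤ m → w m ∈ Set.Icc (1 - (1 / 2) ^ (m + 1)) 1
  recurrence : ∀ n : ℕ, ((n : ℝ) + 2) * c (n + 2) = ∑ j ∈ range (n + 1), c j * w (n + 1 - j)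

namespace NearOneRecurrence

variable {c w : ℕ → ℝ}

lemma weight_nonneg (h : NearOneRecurrence c w) {m : ℕ} (hm : 1 ≤ m) : 0 ≤ w m :=
  le_trans (sub_nonneg.2 (pow_le_one₀ (by norm_num) (by norm_num))) (h.weight_mem m hm).1

lemma mem_Icc (h : NearOneRecurrence c w) (k : ℕ) : c k ∈ Set.Icc 0 1 := by
  induction k using Nat.strong_induction_on with
  | _ k ih =>
    match k, ih with
    | 0, _ => simp [h.zero]
    | 1, _ => simp [h.one]
    | n + 2, ih =>
      have hterm : ∀ j ∈ range (n + 1), c j * w (n + 1 - j) ∈ Set.Icc 0 1 := fun j hj => by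
        have hj : j < n + 1 := mem_range.1 hj
        obtain ⟨hc0, hc1⟩ := ih j (by omega)
        exact ⟨mul_nonneg hc0 (h.weight_nonneg (by omega)),
          mul_le_one₀ hc1 (h.weight_nonneg (by omega)) (h.weight_mem _ (by omega)).2⟩
      have hlo := sum_nonneg fun j hj => (hterm j hj).1
      have hhi := sum_le_card_nsmul _ _ 1 fun j hj => (hterm j hj).2
      simp only [card_range, nsmul_eq_mul, mul_one] at hhi
      rw [← h.recurrence n] at hlo hhi
      push_cast at hhi
      constructor <;> nlinarith

lemma sum_sub_half_le (h : NearOneRecurrence c w) (n : ℕ) :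
    ∑ j ∈ range (n + 1), c j - 1 / 2 ≤ ((n : ℝ) + 2) * c (n + 2) := by
  have hterm : ∀ j ∈ range (n + 1), c j - (1 / 2) ^ (n + 2 - j) ≤ c j * w (n + 1 - j) :=
    fun j hj => by
      have hj : j < n + 1 := mem_range.1 hj
      obtain ⟨hc0, hc1⟩ := h.mem_Icc j
      have hw := (h.weight_mem (n + 1 - j) (by omega)).1
      rw [show n + 1 - j + 1 = n + 2 - j by omega] at hw
      have hpow : (0 : ℝ) ≤ (1 / 2) ^ (n + 2 - j) := by positivity
      nlinarith [mul_le_mul_of_nonneg_left hw hc0, mul_le_of_le_one_left hpow hc1]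
  calc ∑ j ∈ range (n + 1), c j - 1 / 2
      ≤ ∑ j ∈ range (n + 1), c j - ∑ j ∈ range (n + 1), (1 / 2 : ℝ) ^ (n + 2 - j) := by
        gcongr; exact sum_range_half_pow_le n
    _ ≤ ((n : ℝ) + 2) * c (n + 2) := by
        rw [h.recurrence n, ← sum_sub_distrib]; exact sum_le_sum hterm

lemma one_sixth_le_of_sum_ge (h : NearOneRecurrence c w) {n : ℕ}
    (hsum : ((n : ℝ) + 5) / 6 ≤ ∑ j ∈ range (n + 1), c j) : 1 / 6 ≤ c (n + 2) := by
  nlinarith [h.sum_sub_half_le n]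

lemma le_sum_range (h : NearOneRecurrence c w) (n : ℕ) :
    ((n : ℝ) + 5) / 6 ≤ ∑ j ∈ range (n + 1), c j := by
  induction n using Nat.strong_induction_on with
  | _ n ih =>
    match n, ih with
    | 0, _ => norm_num [h.zero]
    | 1, _ => norm_num [sum_range_succ, h.zero, h.one]
    | m + 2, ih =>
      have hc := h.one_sixth_le_of_sum_ge (ih m (by omega))
      have hS := ih (m + 1) (by omega)
      rw [sum_range_succ]
      push_cast at hS ⊢
      linarith

lemma one_sixth_le (h : NearOneRecurrence c w) (n : ℕ) : 1 / 6 ≤ c (n + 2) :=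
  h.one_sixth_le_of_sum_ge (h.le_sum_range n)

lemma one_sub_weight_mem (h : NearOneRecurrence c w) {m : ℕ} (hm : 1 ≤ m) :
    1 - w m ∈ Set.Icc 0 ((3 / 4) ^ (m + 1)) := by
  obtain ⟨hlo, hhi⟩ := h.weight_mem m hm
  have : (1 / 2 : ℝ) ^ (m + 1) ≤ (3 / 4) ^ (m + 1) := pow_le_pow_left₀ (by norm_num) (by norm_num) _
  constructor <;> linarith

lemma abs_sub_le_of_forall_lt (h : NearOneRecurrence c w) {n : ℕ}
    (ih : ∀ i < n + 2, |c (i + 1) - c i| ≤ 2 * (3 / 4) ^ i) :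
    |c (n + 3) - c (n + 2)| ≤ 2 * (3 / 4) ^ (n + 2) := by
  set ε : ℕ → ℝ := fun m => 1 - w m
  have hid := mul_sub_eq_of_recurrence (ε := ε) (by simpa [ε] using h.recurrence) n
  rw [h.zero, one_mul] at hid
  have hsum : |∑ i ∈ range (n + 1), (c (i + 1) - c i) * ε (n + 1 - i)| ≤
      (n + 1) * (2 * (3 / 4) ^ (n + 2)) := by
    calc _ ≤ ∑ i ∈ range (n + 1), |(c (i + 1) - c i) * ε (n + 1 - i)| := abs_sum_le_sum_abs _ _
      _ ≤ ∑ i ∈ range (n + 1), 2 * (3 / 4 : ℝ) ^ (n + 2) := sum_le_sum fun i hi => by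
          have hi : i < n + 1 := mem_range.1 hi
          obtain ⟨hε0, hε1⟩ := h.one_sub_weight_mem (m := n + 1 - i) (by omega)
          rw [abs_mul, abs_of_nonneg hε0, show n + 2 = i + (n + 1 - i + 1) by omega, pow_add,
            ← mul_assoc]
          exact mul_le_mul (ih i (by omega)) hε1 hε0 (by positivity)
      _ = _ := by simp
  obtain ⟨hε0, hε1⟩ := h.one_sub_weight_mem (m := n + 2) (by omega)
  have htri := abs_sub (-(c (n + 2) - c (n + 1)) - ε (n + 2))
    (∑ i ∈ range (n + 1), (c (i + 1) - c i) * ε (n + 1 - i))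
  have htri' := abs_sub (-(c (n + 2) - c (n + 1))) (ε (n + 2))
  rw [abs_neg, abs_of_nonneg hε0] at htri'
  rw [← hid, abs_mul, abs_of_pos (by positivity)] at htri
  have hprev := ih (n + 1) (by omega)
  have hr : (0 : ℝ) ≤ (3 / 4) ^ (n + 1) := by positivity
  -- closes because `2 + (3/4)^2 ≤ 4 * (3/4)`
  have hbound : ((n : ℝ) + 3) * |c (n + 3) - c (n + 2)| ≤ (n + 3) * (2 * (3 / 4) ^ (n + 2)) := by
    rw [pow_succ] at hε1 hsum ⊢
    rw [pow_succ] at hε1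
    linarith
  exact le_of_mul_le_mul_left hbound (by positivity)

lemma abs_sub_le_geometric (h : NearOneRecurrence c w) (i : ℕ) :
    |c (i + 1) - c i| ≤ 2 * (3 / 4) ^ i := by
  induction i using Nat.strong_induction_on with
  | _ i ih =>
    match i, ih with
    | 0, _ => norm_num [h.zero, h.one]
    | 1, _ =>
      obtain ⟨hc0, hc1⟩ := h.mem_Icc 2
      rw [h.one, sub_zero, abs_of_nonneg hc0]
      linarith
    | n + 2, ih => exact h.abs_sub_le_of_forall_lt ih

lemma exists_one_sixth_le_tendsto (h : NearOneRecurrence c w) :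
    ∃ A, 1 / 6 ≤ A ∧ Tendsto c atTop (𝓝 A) := by
  obtain ⟨A, hA⟩ := cauchySeq_tendsto_of_complete <|
    cauchySeq_of_le_geometric (f := c) (3 / 4) 2 (by norm_num) fun n => by
      rw [dist_comm, Real.dist_eq]; exact h.abs_sub_le_geometric n
  refine ⟨A, ge_of_tendsto hA (eventually_atTop.2 ⟨2, fun k hk => ?_⟩), hA⟩
  obtain ⟨n, rfl⟩ := Nat.exists_eq_add_of_le' hk
  exact h.one_sixth_le n

end NearOneRecurrence

lemma tendsto_succ_div_self_of_tendsto {u : ℕ → ℝ} {A : ℝ} (hu : Tendsto u atTop (𝓝 A))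
    (hA : A ≠ 0) : Tendsto (fun k => u (k + 1) / u k) atTop (𝓝 1) := by
  have := (hu.comp (tendsto_add_atTop_nat 1)).div hu hA
  rw [div_self hA] at this
  exact this

theorem a_ratio_tendsto_neg_one (a : ℕ → ℝ)
    (h0 : a 0 = 1) (h1 : a 1 = 0)
    (hrec : ∀ k, 2 ≤ k →
      a k = (1 / (k : ℝ)) * ∑ j ∈ Finset.range (k - 1), a j * b (k - 1 - j)) :
    Tendsto (fun k => a (k + 1) / a k) atTop (𝓝 (-1)) := by
  set c : ℕ → ℝ := fun k => (-1) ^ k * a k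
  have hc : NearOneRecurrence c eta :=
    ⟨by simp [c, h0], by simp [c, h1], fun _ hm => eta_mem_Icc hm,
      recurrence_neg_one_pow_mul a hrec⟩
  obtain ⟨A, hA, hlim⟩ := hc.exists_one_sixth_le_tendsto
  have hratio : ∀ k, a (k + 1) / a k = -(c (k + 1) / c k) := fun k => by
    simp only [c, pow_succ, mul_neg_one, neg_mul, neg_div, neg_neg]
    rw [mul_div_mul_left _ _ (pow_ne_zero k (by norm_num))]
  simpa [hratio] using (tendsto_succ_div_self_of_tendsto hlim (by positivity)).neg
end
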